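/- Let A ∈ ℝ^{n×n}, B ∈ ℝ^{n×m}, T > 0, let u : [0,NT] → ℝ^m be the piecewise constant signal u(t + iT) = μ_i for 0 ≤ t < T, i = 0,…,N−1, with μ_0,…,μ_{N−1} ∈ ℝ^m, and let x : [0,NT] → ℝ^n solve ẋ = A x + B u. Suppose the matrix M_0 consisting of H_L(μ) stacked on top of the row of sampled states [x(0), x(T), …, x((N−L)T)] has full row rank Lm + n. Then for every 0 ≤ t < T, the matrix M_t consisting of H_L(μ) stacked on top of [x(t), x(t+T), …, x(t+(N−L)T)] also has full row rank Lm + n. (Key identity: [x(t), …, x(t+(N−L)T)] = [∫_0^t e^{A(t−τ)}dτ B, 0, …, 0, e^{At}] · M_0, and e^{At} is nonsingular.) -/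

import Mathlib

open Set NormedSpace

/-- Variation of constants: if `y' = A y + w` on `[0,t]` then
`y t = e^{tA} y 0 + e^{tA} (∫_0^t e^{-τA} dτ) w`. -/
lemma var_const {n : ℕ} (A : Matrix (Fin n) (Fin n) ℝ) {t : ℝ} (ht : 0 < t) :
    ∃ C : Matrix (Fin n) (Fin n) ℝ, ∀ (y : ℝ → Fin n → ℝ) (w : Fin n → ℝ),
    (∀ s ∈ Set.Icc (0:ℝ) t, HasDerivWithinAt y (A.mulVec (y s) + w) (Set.Icc (0:ℝ) t) s) →
    y t = (exp (t • A)).mulVec (y 0) + (exp (t • A) * C).mulVec w := by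
  letI : SeminormedRing (Matrix (Fin n) (Fin n) ℝ) := Matrix.linftyOpSemiNormedRing
  letI : NormedRing (Matrix (Fin n) (Fin n) ℝ) := Matrix.linftyOpNormedRing
  letI : NormedAlgebra ℝ (Matrix (Fin n) (Fin n) ℝ) := Matrix.linftyOpNormedAlgebra
  letI : NormedAlgebra ℚ (Matrix (Fin n) (Fin n) ℝ) := NormedAlgebra.restrictScalars ℚ ℝ _
  -- the continuous linear map sending a matrix to the CLM it induces on vectors
  let Jlin : Matrix (Fin n) (Fin n) ℝ →ₗ[ℝ] ((Fin n → ℝ) →L[ℝ] (Fin n → ℝ)) :=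
    { toFun := fun M => LinearMap.toContinuousLinearMap M.mulVecLin
      map_add' := by intro M N; ext v i; simp [Matrix.add_mulVec, Matrix.mulVecLin]
      map_smul' := by intro c M; ext v i; simp [Matrix.smul_mulVec, Matrix.mulVecLin] }
  let J : Matrix (Fin n) (Fin n) ℝ →L[ℝ] ((Fin n → ℝ) →L[ℝ] (Fin n → ℝ)) :=
    LinearMap.toContinuousLinearMap Jlin
  have hJ : ∀ (M : Matrix (Fin n) (Fin n) ℝ) (v : Fin n → ℝ), J M v = M.mulVec v := fun _ _ => rfl
  let E : ℝ → Matrix (Fin n) (Fin n) ℝ := fun s => exp (s • (-A))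
  have hEc : Continuous E := exp_continuous.comp (continuous_id.smul continuous_const)
  have hEd : ∀ s : ℝ, HasDerivAt E (E s * (-A)) s := fun s => hasDerivAt_exp_smul_const (-A) s
  refine ⟨∫ τ in (0:ℝ)..t, E τ, fun y w hy => ?_⟩
  -- φ
  let φ : ℝ → Fin n → ℝ := fun s => (E s).mulVec (y s)
  have hφ : ∀ s ∈ Set.Icc (0:ℝ) t,
      HasDerivWithinAt φ ((E s).mulVec w) (Set.Icc (0:ℝ) t) s := by
    intro s hs
    have hc : HasDerivWithinAt (fun s => J (E s)) (J (E s * (-A))) (Set.Icc (0:ℝ) t) s :=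
      (J.hasFDerivAt.comp_hasDerivAt s (hEd s)).hasDerivWithinAt
    have := hc.clm_apply (hy s hs)
    have heq : J (E s * (-A)) (y s) + J (E s) (A.mulVec (y s) + w) = (E s).mulVec w := by
      rw [hJ, hJ, Matrix.mulVec_add, ← Matrix.mulVec_mulVec, Matrix.neg_mulVec,
        Matrix.mulVec_neg]
      abel
    rw [heq] at this
    exact this
  -- ψ
  let ψ : ℝ → Fin n → ℝ := fun s => (∫ τ in (0:ℝ)..s, E τ).mulVec w
  have hψ : ∀ s : ℝ, HasDerivAt ψ ((E s).mulVec w) s := by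
    intro s
    have h1 : HasDerivAt (fun s => ∫ τ in (0:ℝ)..s, E τ) (E s) s :=
      (hEc.integral_hasStrictDerivAt 0 s).hasDerivAt
    have h2 := (J.flip w).hasFDerivAt.comp_hasDerivAt s h1
    exact h2
  -- φ - ψ is constant
  have hconst : φ t - ψ t = φ 0 - ψ 0 := by
    have hd : ∀ s ∈ Set.Icc (0:ℝ) t,
        HasDerivWithinAt (fun s => φ s - ψ s) 0 (Set.Icc (0:ℝ) t) s := by
      intro s hs
      have h := (hφ s hs).sub (hψ s).hasDerivWithinAt
      rw [sub_self] at h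
      exact h
    have := constant_of_derivWithin_zero (f := fun s => φ s - ψ s) (a := 0) (b := t)
      (fun s hs => (hd s hs).differentiableWithinAt)
      (fun s hs => (hd s (Set.Ico_subset_Icc_self hs)).derivWithin
        ((uniqueDiffOn_Icc ht) s (Set.Ico_subset_Icc_self hs)))
    exact this t (Set.right_mem_Icc.2 ht.le)
  have hφ0 : φ 0 = y 0 := by
    simp only [φ, E, zero_smul, exp_zero, Matrix.one_mulVec]
  have hψ0 : ψ 0 = 0 := by
    simp only [ψ, intervalIntegral.integral_same, Matrix.zero_mulVec]
  have hkey : (E t).mulVec (y t) = y 0 + (∫ τ in (0:ℝ)..t, E τ).mulVec w := by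
    have := hconst
    rw [hφ0, hψ0, sub_zero] at this
    have := sub_eq_iff_eq_add.mp this
    simpa [φ, ψ] using this
  have hinv : exp (t • A) * E t = 1 := by
    rw [← Matrix.exp_add_of_commute _ _
      (((Commute.refl A).neg_right.smul_left t).smul_right t)]
    rw [smul_neg, add_neg_cancel, exp_zero]
  calc y t = (exp (t • A) * E t).mulVec (y t) := by rw [hinv, Matrix.one_mulVec]
    _ = (exp (t • A)).mulVec ((E t).mulVec (y t)) := by rw [Matrix.mulVec_mulVec]
    _ = (exp (t • A)).mulVec (y 0 + (∫ τ in (0:ℝ)..t, E τ).mulVec w) := by rw [hkey]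
    _ = _ := by rw [Matrix.mulVec_add, Matrix.mulVec_mulVec]

/-- Hankel matrix of depth `L` of a sequence `μ_0, …, μ_{N-1}` in `ℝ^m`:
the `Lm × (N-L+1)` matrix whose `(i,j)` block is `μ_{i+j}`. -/
def dHankel {σ : ℕ} (L N : ℕ) (z : ℕ → Fin σ → ℝ) :
    Matrix (Fin L × Fin σ) (Fin (N - L + 1)) ℝ :=
  Matrix.of fun p j => z ((p.1 : ℕ) + (j : ℕ)) p.2

/-- Row of sampled states `[x(t), x(t+T), …, x(t+(N-L)T)]`. -/
def ctRow {σ : ℕ} (N L : ℕ) (T : ℝ) (z : ℝ → Fin σ → ℝ) (t : ℝ) :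
    Matrix (Fin σ) (Fin (N - L + 1)) ℝ :=
  Matrix.of fun a j => z (t + (j : ℕ) * T) a

/-- **Propagation of the full-rank property along time (proof step of Lemma 1).**
Let `u` be the piecewise constant input `u(t+iT) = μ_i` and `x` a solution of
`ẋ = A x + B u` on `[0,NT]`.  If `M_0 = [H_L(μ); x(0), x(T), …, x((N-L)T)]` has full row
rank `Lm + n`, then for every `0 ≤ t < T` the matrix
`M_t = [H_L(μ); x(t), x(t+T), …, x(t+(N-L)T)]` also has full row rank `Lm + n`. -/
theorem stmt5 {n m N L : ℕ} (hL : 1 ≤ L) (hLn : L ≤ N)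
    (A : Matrix (Fin n) (Fin n) ℝ) (B : Matrix (Fin n) (Fin m) ℝ)
    (T : ℝ) (hT : 0 < T) (μ : ℕ → Fin m → ℝ)
    (u : ℝ → Fin m → ℝ) (x : ℝ → Fin n → ℝ)
    (hu : ∀ i : ℕ, i < N → ∀ τ : ℝ, 0 ≤ τ → τ < T → u (τ + (i : ℝ) * T) = μ i)
    (hx : ∀ t ∈ Set.Icc (0:ℝ) ((N : ℝ) * T),
      HasDerivWithinAt x (A.mulVec (x t) + B.mulVec (u t)) (Set.Icc 0 ((N : ℝ) * T)) t)
    (h0 : (Matrix.fromRows (dHankel L N μ) (ctRow N L T x 0)).rank = L * m + n) :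
    ∀ t ∈ Set.Ico (0:ℝ) T,
      (Matrix.fromRows (dHankel L N μ) (ctRow N L T x t)).rank = L * m + n := by
  intro t ht
  rcases eq_or_lt_of_le ht.1 with h0t | h0t
  · rw [← h0t]; exact h0
  obtain ⟨C, hC⟩ := var_const A h0t
  set E : Matrix (Fin n) (Fin n) ℝ := exp (t • A) with hE
  have hN1 : 1 ≤ N := le_trans hL hLn
  -- key identity for each column
  have key : ∀ j : Fin (N - L + 1), ∀ a : Fin n,
      x (t + (j : ℕ) * T) a =
        (∑ b, E a b * x (0 + (j : ℕ) * T) b) + ∑ c, ((E * C) * B) a c * μ (j : ℕ) c := by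
    intro j a
    have hj1 : (j : ℕ) ≤ N - L := Nat.lt_succ_iff.mp j.2
    have hjN : (j : ℕ) < N := by omega
    have hjR : ((j : ℕ) : ℝ) ≤ (N : ℝ) - 1 := by
      have : ((j : ℕ) : ℝ) ≤ ((N - 1 : ℕ) : ℝ) := by exact_mod_cast Nat.le_sub_one_of_lt hjN
      rwa [Nat.cast_sub hN1, Nat.cast_one] at this
    set c : ℝ := ((j : ℕ) : ℝ) * T with hc
    have hc0 : 0 ≤ c := mul_nonneg (Nat.cast_nonneg _) hT.le
    have hy : ∀ s ∈ Set.Icc (0:ℝ) t,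
        HasDerivWithinAt (fun s => x (s + c)) (A.mulVec (x (s + c)) + B.mulVec (μ (j : ℕ)))
          (Set.Icc (0:ℝ) t) s := by
      intro s hs
      have hsT : s < T := lt_of_le_of_lt hs.2 ht.2
      have hmem : s + c ∈ Set.Icc (0:ℝ) ((N : ℝ) * T) := by
        constructor
        · linarith [hs.1]
        · have h1 : c ≤ ((N : ℝ) - 1) * T := mul_le_mul_of_nonneg_right hjR hT.le
          nlinarith
      have hmt : Set.MapsTo (fun s : ℝ => s + c) (Set.Icc (0:ℝ) t) (Set.Icc 0 ((N : ℝ) * T)) := by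
        intro s' hs'
        constructor
        · have := hs'.1; simp only; linarith
        · have h1 : c ≤ ((N : ℝ) - 1) * T := mul_le_mul_of_nonneg_right hjR hT.le
          have h2 := hs'.2
          have h3 := ht.2
          simp only
          nlinarith
      have hinner : HasDerivWithinAt (fun s : ℝ => s + c) 1 (Set.Icc (0:ℝ) t) s :=
        (hasDerivWithinAt_id s _).add_const c
      have houter := hx (s + c) hmem
      have := houter.scomp s hinner hmt
      rw [one_smul] at this
      rwa [hu (j : ℕ) hjN s hs.1 hsT] at this
    have := hC (fun s => x (s + c)) (B.mulVec (μ (j : ℕ))) hy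
    beta_reduce at this
    have h2 : x (t + c) a = (E.mulVec (x (0 + c)) + ((E * C) * B).mulVec (μ (j : ℕ))) a := by
      rw [this]
      simp [Matrix.mulVec_mulVec, hE]
    simpa [Matrix.mulVec, dotProduct] using h2
  -- matrix identity  M_t = P * M_0
  classical
  set i0 : Fin L := ⟨0, hL⟩ with hi0
  set G : Matrix (Fin n) (Fin L × Fin m) ℝ :=
    Matrix.of (fun a p => if p.1 = i0 then ((E * C) * B) a p.2 else 0) with hG
  set P : Matrix ((Fin L × Fin m) ⊕ Fin n) ((Fin L × Fin m) ⊕ Fin n) ℝ :=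
    Matrix.fromBlocks 1 0 G E with hP
  have hM : Matrix.fromRows (dHankel L N μ) (ctRow N L T x t) =
      P * Matrix.fromRows (dHankel L N μ) (ctRow N L T x 0) := by
    ext i j
    cases i with
    | inl p =>
      simp [Matrix.mul_apply, Fintype.sum_sum_type, Matrix.one_apply, ite_mul, one_mul,
        zero_mul, Finset.sum_ite_eq, dHankel, ctRow, hP]
    | inr a =>
      rw [Matrix.fromRows_apply_inr]
      simp only [ctRow, Matrix.of_apply]
      rw [key j a]
      simp [Matrix.mul_apply, Fintype.sum_sum_type, Fintype.sum_prod_type, hP, hG,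
        Matrix.fromRows_apply_inl, Matrix.fromRows_apply_inr, ite_mul, zero_mul,
        Finset.sum_ite_eq, Finset.sum_ite_eq', hi0, dHankel, ctRow, add_comm]
  have hEdet : IsUnit E.det := (Matrix.isUnit_iff_isUnit_det _).mp (Matrix.isUnit_exp _)
  have hPdet : IsUnit P.det := by
    rw [hP, Matrix.det_fromBlocks_zero₁₂, Matrix.det_one, one_mul]
    exact hEdet
  rw [hM, Matrix.rank_mul_eq_right_of_isUnit_det P _ hPdet]
  exact h0
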